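/- arXiv:0906.1191 — 9 statements merged into one kernel-verified Lean document; each statement's English description precedes it below -/
import Mathlib

section
/- Let a, b be positive integers with gcd(a,b) = 1 and let r ∈ ℝ. Then there exists v ∈ ℤ² such that S_{a,b,r} = S_{a,b} + v and C_{a,b,r} = C_{a,b} + v, where + denotes translation by the vector v. -/
/-- Membership of a lattice point `z` in the half-plane
`H^σ_{a,b,r} = {x ∈ ℝ² : 0 ≤ σ·((b/a)·x₁ − x₂ + r)}`. -/
def inH (a b σ : ℤ) (r : ℝ) (z : ℤ × ℤ) : Prop :=
  0 ≤ (σ : ℝ) * ((b : ℝ) / (a : ℝ) * (z.1 : ℝ) - (z.2 : ℝ) + r)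

/-- The staircase `S^σ_{a,b,r}`. -/
def stair (a b σ : ℤ) (r : ℝ) : Set (ℤ × ℤ) :=
  {z | inH a b σ r z ∧
    (¬ inH a b σ r (z.1 - σ, z.2) ∨ ¬ inH a b σ r (z.1, z.2 + σ))}

/-- The set of corners `C^σ_{a,b,r}`. -/
def corner (a b σ : ℤ) (r : ℝ) : Set (ℤ × ℤ) :=
  {z | inH a b σ r z ∧
    (¬ inH a b σ r (z.1 - σ, z.2) ∧ ¬ inH a b σ r (z.1, z.2 + σ))}

/-- The column `col_x(A)` of a set `A ⊆ ℤ²`. -/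
def col (x : ℤ) (A : Set (ℤ × ℤ)) : Set (ℤ × ℤ) := {p ∈ A | p.1 = x}

/-! The half-plane `H_{a,b,r}` meets `ℤ²` in `{z | ⌈-a r⌉ ≤ b z₁ - a z₂}`. By
Bézout some `v ∈ ℤ²` has `b v₁ - a v₂ = ⌈-a r⌉`, so translation by `v` carries
the lattice points of `H_{a,b}` onto those of `H_{a,b,r}`; staircases and corners
are defined from these lattice points alone, hence are carried along. -/

section Translate

variable {a b σ : ℤ} {r r' : ℝ} {v : ℤ × ℤ}

lemma inH_sub_iff (h : ∀ z, inH a b σ r (z + v) ↔ inH a b σ r' z) (w : ℤ × ℤ) :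
    inH a b σ r' (w - v) ↔ inH a b σ r w := by
  rw [← h, sub_add_cancel]

lemma stair_eq_image_add (h : ∀ z, inH a b σ r (z + v) ↔ inH a b σ r' z) :
    stair a b σ r = (· + v) '' stair a b σ r' := by
  ext w
  rw [Set.image_add_right, Set.mem_preimage, ← sub_eq_add_neg]
  have hσ : ((w - v).1 - σ, (w - v).2) = (w.1 - σ, w.2) - v := by ext <;> simp; ring
  have hσ' : ((w - v).1, (w - v).2 + σ) = (w.1, w.2 + σ) - v := by ext <;> simp; ring
  simp only [stair, Set.mem_ofPred_eq, hσ, hσ', inH_sub_iff h]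

lemma corner_eq_image_add (h : ∀ z, inH a b σ r (z + v) ↔ inH a b σ r' z) :
    corner a b σ r = (· + v) '' corner a b σ r' := by
  ext w
  rw [Set.image_add_right, Set.mem_preimage, ← sub_eq_add_neg]
  have hσ : ((w - v).1 - σ, (w - v).2) = (w.1 - σ, w.2) - v := by ext <;> simp; ring
  have hσ' : ((w - v).1, (w - v).2 + σ) = (w.1, w.2 + σ) - v := by ext <;> simp; ring
  simp only [corner, Set.mem_ofPred_eq, hσ, hσ', inH_sub_iff h]

end Translate

lemma inH_one_iff {a : ℤ} (ha : 0 < a) (b : ℤ) (r : ℝ) (z : ℤ × ℤ) :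
    inH a b 1 r z ↔ ⌈-((a : ℝ) * r)⌉ ≤ b * z.1 - a * z.2 := by
  have ha' : (0 : ℝ) < a := by exact_mod_cast ha
  have hz : (1 : ℝ) * ((b : ℝ) / a * z.1 - z.2 + r) =
      (((b * z.1 - a * z.2 : ℤ) : ℝ) + a * r) / a := by
    push_cast
    field_simp
  rw [inH, Int.cast_one, hz, div_nonneg_iff, Int.ceil_le]
  constructor
  · rintro (⟨h, -⟩ | ⟨-, h⟩)
    · linarith
    · linarith
  · intro h
    left
    constructor <;> linarith

lemma inH_one_add_iff {a : ℤ} (ha : 0 < a) (b : ℤ) (r : ℝ) {v : ℤ × ℤ}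
    (hv : b * v.1 - a * v.2 = ⌈-((a : ℝ) * r)⌉) (z : ℤ × ℤ) :
    inH a b 1 r (z + v) ↔ inH a b 1 0 z := by
  rw [inH_one_iff ha, inH_one_iff ha, mul_zero, neg_zero, Int.ceil_zero, ← hv,
    Prod.fst_add, Prod.snd_add]
  constructor <;> intro h <;> linarith

lemma IsCoprime.exists_mul_fst_sub_mul_snd_eq {a b : ℤ} (hab : IsCoprime a b) (m : ℤ) :
    ∃ v : ℤ × ℤ, b * v.1 - a * v.2 = m := by
  obtain ⟨x, y, hxy⟩ := hab
  exact ⟨(m * y, -(m * x)), by linear_combination m * hxy⟩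

theorem stmt3_general (a b : ℤ) (ha : 0 < a) (hg : Int.gcd a b = 1) (r : ℝ) :
    ∃ v : ℤ × ℤ,
      stair a b 1 r = (fun z => z + v) '' stair a b 1 0 ∧
      corner a b 1 r = (fun z => z + v) '' corner a b 1 0 := by
  obtain ⟨v, hv⟩ :=
    (Int.isCoprime_iff_gcd_eq_one.mpr hg).exists_mul_fst_sub_mul_snd_eq ⌈-((a : ℝ) * r)⌉
  have htrans := inH_one_add_iff ha b r hv
  exact ⟨v, stair_eq_image_add htrans, corner_eq_image_add htrans⟩

theorem stmt3 (a b : ℤ) (ha : 0 < a) (hb : 0 < b) (hg : Int.gcd a b = 1) (r : ℝ) :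
    ∃ v : ℤ × ℤ,
      stair a b 1 r = (fun z => z + v) '' stair a b 1 0 ∧
      corner a b 1 r = (fun z => z + v) '' corner a b 1 0 :=
  stmt3_general a b ha hg r
end

section
/- Let a, b be positive integers with gcd(a,b) = 1 and σ ∈ {+1,−1}. Then there exists i ∈ ℤ such that |col_{−n}(S^σ_{a,b})| = |col_{n+i}(S^σ_{a,b})| for all n ∈ ℤ; that is, the column sequence of S^σ_{a,b} is invariant up to shift under reversal. -/
/-!
After clearing the denominator `a`, column `x` of `S_{a,b}` consists of the `y` with
`b x - M < a y ≤ b x`, where `M = max a b`, and column `x` of `S^{-1}_{a,b}` is the mirror image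
of column `-x` of `S_{a,b}`. So every column size counts the multiples of `a` in a window
`(t - M, t]`, a count invariant under `t ↦ t + a` and under the reflection `t ↦ M - 1 - t`.
As `b` is invertible modulo `a`, some shift `i` gives `b (n + i) ≡ M - 1 + b n (mod a)`, which
carries column `-n` to column `n + i`.
-/

lemma inH_zero_iff {a : ℤ} (b σ : ℤ) (ha : 0 < a) (z : ℤ × ℤ) :
    inH a b σ 0 z ↔ 0 ≤ σ * (b * z.1 - a * z.2) := by
  have ha' : (0 : ℝ) < a := by exact_mod_cast ha
  have key : (σ : ℝ) * ((b : ℝ) / a * z.1 - z.2 + 0) = σ * (b * z.1 - a * z.2) / a := by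
    field_simp
    ring
  rw [inH, key, le_div_iff₀ ha', zero_mul]
  exact_mod_cast Iff.rfl

lemma ncard_col (x : ℤ) (A : Set (ℤ × ℤ)) :
    (col x A).ncard = {y : ℤ | (x, y) ∈ A}.ncard := by
  have h : col x A = Prod.mk x '' {y : ℤ | (x, y) ∈ A} := by
    ext ⟨p, q⟩
    constructor
    · rintro ⟨hA, rfl : p = x⟩
      exact ⟨q, hA, rfl⟩
    · rintro ⟨y, hy, ⟨⟩⟩
      exact ⟨hy, rfl⟩
  rw [h, Set.ncard_image_of_injective _ (Prod.mk_right_injective x)]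

def slab (a M t : ℤ) : Set ℤ := {y | t - M < y * a ∧ y * a ≤ t}

section slab

variable (a M : ℤ)

lemma slab_add_mul (t k : ℤ) : slab a M (t + k * a) = (· + k) '' slab a M t := by
  rw [Set.image_add_right]
  ext y
  simp only [slab, Set.mem_ofPred_eq, Set.mem_preimage]
  constructor <;> rintro ⟨h₁, h₂⟩ <;> constructor <;> linarith

lemma slab_reflect (t : ℤ) : slab a M (M - 1 - t) = -slab a M t := by
  ext y
  simp only [slab, Set.mem_ofPred_eq, Set.mem_neg, neg_mul]
  omega

lemma ncard_slab_add_mul (t k : ℤ) : (slab a M (t + k * a)).ncard = (slab a M t).ncard := by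
  rw [slab_add_mul, Set.ncard_image_of_injective _ (add_left_injective k)]

lemma ncard_slab_reflect (t : ℤ) : (slab a M (M - 1 - t)).ncard = (slab a M t).ncard := by
  rw [slab_reflect, Set.ncard_neg]

lemma exists_shift_ncard_slab_neg_eq {b : ℤ} (hab : IsCoprime a b) :
    ∃ i : ℤ, ∀ m : ℤ, (slab a M (-(b * m))).ncard = (slab a M (b * (m + i))).ncard := by
  obtain ⟨u, v, huv⟩ := hab
  refine ⟨v * (M - 1), fun m => ?_⟩
  have hshift : b * (m + v * (M - 1)) = (M - 1 - -(b * m)) + -(u * (M - 1)) * a := by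
    linear_combination (M - 1) * huv
  rw [hshift, ncard_slab_add_mul, ncard_slab_reflect]

end slab

lemma ncard_col_stair_one {a : ℤ} (b : ℤ) (ha : 0 < a) (x : ℤ) :
    (col x (stair a b 1 0)).ncard = (slab a (max a b) (b * x)).ncard := by
  rw [ncard_col]
  congr 1
  ext y
  simp only [stair, slab, Set.mem_ofPred_eq, inH_zero_iff b 1 ha, one_mul]
  rw [mul_comm y]
  have : b * (x - 1) = b * x - b := by ring
  have : a * (y + 1) = a * y + a := by ring
  -- either step out of `H` fails: `b x - b < a y` or `b x - a < a y`, i.e. `b x - max a b < a y`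
  omega

lemma ncard_col_stair_neg_one {a : ℤ} (b : ℤ) (ha : 0 < a) (x : ℤ) :
    (col x (stair a b (-1) 0)).ncard = (slab a (max a b) (-(b * x))).ncard := by
  rw [ncard_col, ← Set.ncard_neg]
  congr 1
  ext y
  simp only [stair, slab, Set.mem_ofPred_eq, Set.mem_neg, inH_zero_iff b (-1) ha]
  have : b * (x - -1) = b * x + b := by ring
  have : a * (-y + -1) = -(y * a) - a := by ring
  have : a * -y = -(y * a) := by ring
  omega

theorem stmt7_general (a b σ : ℤ) (ha : 0 < a) (hg : Int.gcd a b = 1)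
    (hσ : σ = 1 ∨ σ = -1) :
    ∃ i : ℤ, ∀ n : ℤ,
      (col (-n) (stair a b σ 0)).ncard = (col (n + i) (stair a b σ 0)).ncard := by
  obtain ⟨i, hi⟩ :=
    exists_shift_ncard_slab_neg_eq a (max a b) (Int.isCoprime_iff_gcd_eq_one.mpr hg)
  rcases hσ with rfl | rfl
  · refine ⟨i, fun n => ?_⟩
    rw [ncard_col_stair_one b ha, ncard_col_stair_one b ha, mul_neg, hi]
  · refine ⟨-i, fun n => ?_⟩
    rw [ncard_col_stair_neg_one b ha, ncard_col_stair_neg_one b ha, mul_neg, neg_neg, hi (n + -i),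
      neg_add_cancel_right]

theorem stmt7 (a b σ : ℤ) (ha : 0 < a) (hb : 0 < b) (hg : Int.gcd a b = 1)
    (hσ : σ = 1 ∨ σ = -1) :
    ∃ i : ℤ, ∀ n : ℤ,
      (col (-n) (stair a b σ 0)).ncard = (col (n + i) (stair a b σ 0)).ncard :=
  stmt7_general a b σ ha hg hσ
end

section
/- Let a, b be positive integers with a < b and gcd(a,b) = 1, and let A : ℤ² → ℤ² be the linear map A(x,y) = (x, (b div a)·x + y). Then A maps S_{a, b mod a} bijectively onto C_{a,b}; in particular C_{a,b} = A(S_{a, b mod a}). -/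
/-! Write `b = a q + c` with `q = b div a ≥ 1` and `0 ≤ c < a`. The shear `(x, y) ↦ (x, q x + y)`
maps the lattice points of `H_{a,c}` exactly onto those of `H_{a,b}`; it fixes the step `e₂` and
pulls the step `-e₁` back to `(-1, q)`. So a point `z` is sent to a corner iff `z ∈ H_{a,c}` while
`z + (-1, q)` and `z + e₂` are not; because `q ≥ 1` and `c ≤ a`, failing either step of the
staircase condition already forces both. -/

def shear (q : ℤ) (z : ℤ × ℤ) : ℤ × ℤ := (z.1, q * z.1 + z.2)

section
variable {a : ℤ} (ha : 0 < a)
include ha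

lemma inH_one_zero_iff (c : ℤ) (z : ℤ × ℤ) : inH a c 1 0 z ↔ a * z.2 ≤ c * z.1 := by
  unfold inH
  rw [Int.cast_one, one_mul, add_zero, sub_nonneg, div_mul_eq_mul_div,
    le_div_iff₀ (by exact_mod_cast ha), mul_comm (z.2 : ℝ)]
  exact_mod_cast Iff.rfl

lemma inH_shear_iff (c q : ℤ) (z : ℤ × ℤ) :
    inH a (a * q + c) 1 0 (shear q z) ↔ inH a c 1 0 z := by
  simp only [shear, inH_one_zero_iff ha]
  constructor <;> intro h <;> linarith

lemma mem_corner_shear_iff (c q x y : ℤ) :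
    shear q (x, y) ∈ corner a (a * q + c) 1 0 ↔
      inH a c 1 0 (x, y) ∧ ¬ inH a c 1 0 (x - 1, y + q) ∧ ¬ inH a c 1 0 (x, y + 1) := by
  have hleft : (x - 1, q * x + y) = shear q (x - 1, y + q) := by simp only [shear]; ring_nf
  have hup : (x, q * x + y + 1) = shear q (x, y + 1) := by simp only [shear]; ring_nf
  change inH a _ 1 0 (shear q (x, y)) ∧ ¬ inH a _ 1 0 (x - 1, q * x + y) ∧
    ¬ inH a _ 1 0 (x, q * x + y + 1) ↔ _
  rw [hleft, hup, inH_shear_iff ha, inH_shear_iff ha, inH_shear_iff ha]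

lemma mem_stair_iff {c q : ℤ} (hc : 0 ≤ c) (hca : c ≤ a) (hq : 1 ≤ q) (x y : ℤ) :
    (x, y) ∈ stair a c 1 0 ↔
      inH a c 1 0 (x, y) ∧ ¬ inH a c 1 0 (x - 1, y + q) ∧ ¬ inH a c 1 0 (x, y + 1) := by
  have haq : a ≤ a * q := le_mul_of_one_le_right ha.le hq
  simp only [stair, Set.mem_ofPred_eq, inH_one_zero_iff ha, mul_add, mul_sub, mul_one]
  omega

lemma preimage_shear_corner {c q : ℤ} (hc : 0 ≤ c) (hca : c ≤ a) (hq : 1 ≤ q) :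
    shear q ⁻¹' corner a (a * q + c) 1 0 = stair a c 1 0 := by
  ext ⟨x, y⟩
  rw [Set.mem_preimage, mem_corner_shear_iff ha, mem_stair_iff ha hc hca hq]

end

lemma shear_injective (q : ℤ) : Function.Injective (shear q) := by
  rintro ⟨x, y⟩ ⟨x', y'⟩ h
  simp only [shear, Prod.mk.injEq] at h
  obtain ⟨rfl, h⟩ := h
  simpa using h

lemma shear_surjective (q : ℤ) : Function.Surjective (shear q) :=
  fun z => ⟨(z.1, z.2 - q * z.1), by simp [shear]⟩

theorem stmt9_general (a b : ℤ) (ha : 0 < a) (hab : a < b) :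
    Set.BijOn (fun z : ℤ × ℤ => (z.1, b / a * z.1 + z.2))
      (stair a (b % a) 1 0) (corner a b 1 0) ∧
    corner a b 1 0 =
      (fun z : ℤ × ℤ => (z.1, b / a * z.1 + z.2)) '' stair a (b % a) 1 0 := by
  have hq : 1 ≤ b / a := Int.le_ediv_of_mul_le ha (by simpa using hab.le)
  have himage : corner a b 1 0 = shear (b / a) '' stair a (b % a) 1 0 := by
    rw [← preimage_shear_corner ha (Int.emod_nonneg b ha.ne') (Int.emod_lt_of_pos b ha).le hq,
      Int.mul_ediv_add_emod, Set.image_preimage_eq _ (shear_surjective _)]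
  refine ⟨?_, himage⟩
  rw [himage]
  exact (shear_injective _).injOn.bijOn_image

theorem stmt9 (a b : ℤ) (ha : 0 < a) (hab : a < b) (hg : Int.gcd a b = 1) :
    Set.BijOn (fun z : ℤ × ℤ => (z.1, b / a * z.1 + z.2))
      (stair a (b % a) 1 0) (corner a b 1 0) ∧
    corner a b 1 0 =
      (fun z : ℤ × ℤ => (z.1, b / a * z.1 + z.2)) '' stair a (b % a) 1 0 :=
  stmt9_general a b ha hab
end

section
/- Let n ≥ 2 and d be integers with 1 ≤ d ≤ n − 1 and gcd(d,n) = 1. Then the tetrahedron T_{1,d,n} is empty; that is, the only lattice points of ℤ³ contained in conv{(0,0,0), (1,0,0), (0,1,0), (1,d,n)} are its four vertices. -/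
/-! The tetrahedron is cut out by its four facet inequalities `0 ≤ z`, `z ≤ n x`, `d z ≤ n y` and
`n x + n y ≤ n + d z`. For a lattice point with `z = 0` they leave only the vertices of the base
triangle. For `z > 0` they force `x = 1` and `n y = d z`; since `gcd(d, n) = 1` this gives
`n ∣ z`, and together with `z ≤ n x = n` the point is the apex `(1, d, n)`. -/

theorem dotProduct_le_of_mem_convexHull {𝕜 ι : Type*} [Field 𝕜] [LinearOrder 𝕜]
    [IsStrictOrderedRing 𝕜] [Fintype ι] {S : Set (ι → 𝕜)} {w : ι → 𝕜} {r : 𝕜}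
    (hS : ∀ v ∈ S, w ⬝ᵥ v ≤ r) {q : ι → 𝕜} (hq : q ∈ convexHull 𝕜 S) : w ⬝ᵥ q ≤ r :=
  convexHull_min hS (convex_halfSpace_le (dotProductBilin 𝕜 𝕜 w).isLinear r) hq

theorem tetrahedron_facet_ineqs {d n : ℝ} (hn : 0 ≤ n) {q : Fin 3 → ℝ}
    (hq : q ∈ convexHull ℝ {![0, 0, 0], ![1, 0, 0], ![0, 1, 0], ![1, d, n]}) :
    0 ≤ q 2 ∧ q 2 ≤ n * q 0 ∧ d * q 2 ≤ n * q 1 ∧ n * q 0 + n * q 1 ≤ n + d * q 2 := by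
  have facet (w : Fin 3 → ℝ) (r : ℝ)
      (h : ∀ v ∈ ({![0, 0, 0], ![1, 0, 0], ![0, 1, 0], ![1, d, n]} : Set (Fin 3 → ℝ)),
        w ⬝ᵥ v ≤ r) : w ⬝ᵥ q ≤ r :=
    dotProduct_le_of_mem_convexHull h hq
  refine ⟨?_, ?_, ?_, ?_⟩
  · simpa [dotProduct, Fin.sum_univ_three, hn] using facet ![0, 0, -1] 0
  · simpa [dotProduct, Fin.sum_univ_three, hn] using facet ![-n, 0, 1] 0
  · simpa [dotProduct, Fin.sum_univ_three, hn, mul_comm d n] using facet ![0, -n, d] 0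
  · simpa [dotProduct, Fin.sum_univ_three, hn, mul_comm d n] using facet ![n, n, -d] n

theorem eq_vertex_of_facet_ineqs {d n : ℤ} (hn : 0 < n) (hnd : IsCoprime n d) {p : Fin 3 → ℤ}
    (h1 : 0 ≤ p 2) (h2 : p 2 ≤ n * p 0) (h3 : d * p 2 ≤ n * p 1)
    (h4 : n * p 0 + n * p 1 ≤ n + d * p 2) :
    p = ![0, 0, 0] ∨ p = ![1, 0, 0] ∨ p = ![0, 1, 0] ∨ p = ![1, d, n] := by
  obtain ⟨x, y, z, rfl⟩ : ∃ x y z, p = ![x, y, z] :=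
    ⟨p 0, p 1, p 2, by ext i; fin_cases i <;> rfl⟩
  simp only [Matrix.cons_val_zero, Matrix.cons_val_one, Matrix.cons_val_two, Matrix.tail_cons,
    Matrix.head_cons] at h1 h2 h3 h4
  simp only [Matrix.vecCons_inj, and_true]
  rcases h1.eq_or_lt with rfl | hz
  · have hx : 0 ≤ x := nonneg_of_mul_nonneg_right (by simpa using h2) hn
    have hy : 0 ≤ y := nonneg_of_mul_nonneg_right (by simpa using h3) hn
    have hxy : x + y ≤ 1 := le_of_mul_le_mul_left (by linarith) hn
    omega
  · have hx : 0 < x := pos_of_mul_pos_right (hz.trans_le h2) hn.le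
    have hnx : n ≤ n * x := le_mul_of_one_le_right hn.le hx
    have hny : n * y = d * z := by linarith
    have hzn : n ≤ z := Int.le_of_dvd hz (hnd.dvd_of_dvd_mul_left ⟨y, hny.symm⟩)
    obtain rfl : z = n := by linarith
    have hx1 : x = 1 := by simpa using (mul_eq_left₀ hn.ne').1 (by linarith)
    have hyd : y = d := by simpa [mul_comm d, hn.ne'] using hny
    omega

theorem stmt12_general (n d : ℤ) (hn : 2 ≤ n)
    (hg : Int.gcd d n = 1) :
    {p : Fin 3 → ℤ | (fun i => (p i : ℝ)) ∈
        convexHull ℝ ({![0, 0, 0], ![1, 0, 0], ![0, 1, 0],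
          ![1, (d : ℝ), (n : ℝ)]} : Set (Fin 3 → ℝ))} =
      ({![0, 0, 0], ![1, 0, 0], ![0, 1, 0], ![1, d, n]} : Set (Fin 3 → ℤ)) := by
  ext p
  constructor
  · intro hp
    obtain ⟨h1, h2, h3, h4⟩ := tetrahedron_facet_ineqs (by norm_cast; omega) hp
    exact eq_vertex_of_facet_ineqs (by omega) (Int.isCoprime_iff_gcd_eq_one.2 hg).symm
      (by exact_mod_cast h1) (by exact_mod_cast h2) (by exact_mod_cast h3) (by exact_mod_cast h4)
  · rintro (rfl | rfl | rfl | rfl) <;> apply subset_convexHull <;> simp [funext_iff, Fin.forall_fin_succ]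

theorem stmt12 (n d : ℤ) (hn : 2 ≤ n) (hd1 : 1 ≤ d) (hd2 : d ≤ n - 1)
    (hg : Int.gcd d n = 1) :
    {p : Fin 3 → ℤ | (fun i => (p i : ℝ)) ∈
        convexHull ℝ ({![0, 0, 0], ![1, 0, 0], ![0, 1, 0],
          ![1, (d : ℝ), (n : ℝ)]} : Set (Fin 3 → ℝ))} =
      ({![0, 0, 0], ![1, 0, 0], ![0, 1, 0], ![1, d, n]} : Set (Fin 3 → ℤ)) :=
  stmt12_general n d hn hg
end

section
/- Let a, b be positive integers with a < b, let q = b div a, and let A : ℤ² → ℤ² be the linear map A(x,y) = (x, q·x + y). Then T_{a,b} = A(T_{a, b mod a}) ∪ T'_{a, q·a}. -/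
/-!
Both triangles are cut out by the inequalities `0 ≤ x ≤ a`, `0 ≤ y`, `a y ≤ b x`. Writing
`b = q a + r`, a lattice point of `Δ_{a,b}` with `y ≥ q x` is the shear of a lattice point of
`Δ_{a,r}`, and one with `y < q x` lies in `Δ_{a,qa}` strictly below its hypotenuse. This works for
any `q ≥ 0` with `q a ≤ b`; division with remainder is just one choice.
-/

/-- The lattice points of the closed triangle `Δ_{a,b} = conv{(0,0), (a,0), (a,b)}`. -/
def triPts (a b : ℤ) : Set (ℤ × ℤ) :=
  {z | (((z.1 : ℝ), (z.2 : ℝ)) : ℝ × ℝ) ∈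
    convexHull ℝ ({(0, 0), ((a : ℝ), 0), ((a : ℝ), (b : ℝ))} : Set (ℝ × ℝ))}

/-- The lattice points of the half-open triangle
`Δ'_{a,b} = Δ_{a,b} \ conv{(0,0), (a,b)}`. -/
def triPts' (a b : ℤ) : Set (ℤ × ℤ) :=
  {z | (((z.1 : ℝ), (z.2 : ℝ)) : ℝ × ℝ) ∈
    convexHull ℝ ({(0, 0), ((a : ℝ), 0), ((a : ℝ), (b : ℝ))} : Set (ℝ × ℝ)) \
      convexHull ℝ ({(0, 0), ((a : ℝ), (b : ℝ))} : Set (ℝ × ℝ))}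

theorem convex_triangle_ineqs (a b : ℝ) :
    Convex ℝ {p : ℝ × ℝ | 0 ≤ p.1 ∧ p.1 ≤ a ∧ 0 ≤ p.2 ∧ a * p.2 ≤ b * p.1} := by
  rintro p ⟨hp₁, hp₂, hp₃, hp₄⟩ q ⟨hq₁, hq₂, hq₃, hq₄⟩ u v hu hv huv
  simp only [Set.mem_ofPred_eq, Prod.fst_add, Prod.snd_add, Prod.smul_fst, Prod.smul_snd,
    smul_eq_mul]
  refine ⟨by positivity, by nlinarith, by positivity, by nlinarith⟩

theorem mem_convexHull_triangle_iff {a b : ℝ} (ha : 0 < a) (hb : 0 ≤ b) {x y : ℝ} :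
    (x, y) ∈ convexHull ℝ ({(0, 0), (a, 0), (a, b)} : Set (ℝ × ℝ)) ↔
      0 ≤ x ∧ x ≤ a ∧ 0 ≤ y ∧ a * y ≤ b * x := by
  refine ⟨fun h => convexHull_min ?_ (convex_triangle_ineqs a b) h, ?_⟩
  · rintro p (rfl | rfl | rfl) <;> simp only [Set.mem_ofPred_eq] <;>
      refine ⟨by positivity, by linarith, by positivity, by nlinarith⟩
  rintro ⟨hx₀, hxa, hy₀, hxy⟩
  -- the barycentric weight `y / b` of `(a, b)` is also right when `b = 0`, since then `y = 0`
  have hyb : y / b * b = y := by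
    rcases hb.eq_or_lt with rfl | hb
    · simp only [div_zero, zero_mul]; nlinarith
    · field_simp
  have hw : y / b ≤ x / a := by
    rcases hb.eq_or_lt with rfl | hb
    · simp only [div_zero]; positivity
    · rw [div_le_div_iff₀ hb ha]; linarith
  have hxa' : x / a ≤ 1 := (div_le_one ha).2 hxa
  have key := (convex_convexHull ℝ ({(0, 0), (a, 0), (a, b)} : Set (ℝ × ℝ))).sum_mem
    (t := Finset.univ) (w := ![1 - x / a, x / a - y / b, y / b])
    (z := ![(0, 0), (a, 0), (a, b)]) ?_ ?_ ?_
  · convert key using 1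
    simp only [Fin.sum_univ_three, Matrix.cons_val_zero, Matrix.cons_val_one,
      Matrix.cons_val_two, Matrix.head_cons, Matrix.tail_cons, Prod.smul_mk, smul_eq_mul,
      Prod.mk_add_mk, mul_zero, add_zero, zero_add]
    ext
    · field_simp; ring
    · linear_combination -hyb
  · intro i _
    fin_cases i
    · simpa using hxa'
    · simpa using hw
    · simpa using div_nonneg hy₀ hb
  · simp [Fin.sum_univ_three]
  · intro i _; fin_cases i <;> exact subset_convexHull ℝ _ (by simp)

theorem mem_triPts_iff {a b : ℤ} (ha : 0 < a) (hb : 0 ≤ b) {z : ℤ × ℤ} :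
    z ∈ triPts a b ↔ 0 ≤ z.1 ∧ z.1 ≤ a ∧ 0 ≤ z.2 ∧ a * z.2 ≤ b * z.1 := by
  rw [triPts, Set.mem_ofPred_eq, mem_convexHull_triangle_iff (by exact_mod_cast ha)
    (by exact_mod_cast hb)]
  norm_cast

theorem mem_triPts'_of_lt {a b : ℤ} {z : ℤ × ℤ} (hz : z ∈ triPts a b)
    (hlt : a * z.2 < b * z.1) : z ∈ triPts' a b := by
  refine ⟨hz, fun hseg => hlt.ne ?_⟩
  rw [convexHull_pair] at hseg
  obtain ⟨u, v, -, -, -, huv⟩ := hseg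
  simp only [Prod.smul_mk, smul_eq_mul, mul_zero, Prod.mk_add_mk, zero_add,
    Prod.mk.injEq] at huv
  exact_mod_cast show (a : ℝ) * z.2 = b * z.1 by rw [← huv.1, ← huv.2]; ring

theorem mem_shear_image_iff (c : ℤ) (s : Set (ℤ × ℤ)) (z : ℤ × ℤ) :
    z ∈ (fun w : ℤ × ℤ => (w.1, c * w.1 + w.2)) '' s ↔ (z.1, z.2 - c * z.1) ∈ s := by
  constructor
  · rintro ⟨w, hw, rfl⟩
    simpa using hw
  · exact fun hz => ⟨_, hz, by simp⟩

theorem triPts_eq_shear_image_union {a b c : ℤ} (ha : 0 < a) (hc : 0 ≤ c) (hcb : c * a ≤ b) :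
    triPts a b =
      (fun z : ℤ × ℤ => (z.1, c * z.1 + z.2)) '' triPts a (b - c * a) ∪ triPts' a (c * a) := by
  have hca : 0 ≤ c * a := by positivity
  ext ⟨x, y⟩
  simp only [Set.mem_union, mem_shear_image_iff]
  rw [mem_triPts_iff ha (by linarith), mem_triPts_iff ha (by linarith)]
  constructor
  · rintro ⟨hx₀, hxa, hy₀, hxy⟩
    by_cases hy : c * x ≤ y
    · left
      exact ⟨hx₀, hxa, by linarith, by linarith⟩
    · right
      refine mem_triPts'_of_lt ((mem_triPts_iff ha hca).2 ⟨hx₀, hxa, hy₀, ?_⟩) ?_ <;>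
        dsimp only <;> nlinarith
  · rintro (⟨hx₀, hxa, hy₀, hxy⟩ | h)
    · exact ⟨hx₀, hxa, by nlinarith, by linarith⟩
    · obtain ⟨hx₀, hxa, hy₀, hxy⟩ := (mem_triPts_iff ha hca).1 h.1
      exact ⟨hx₀, hxa, hy₀, by nlinarith⟩

theorem stmt14 (a b : ℤ) (ha : 0 < a) (hab : a < b) :
    triPts a b =
      (fun z : ℤ × ℤ => (z.1, b / a * z.1 + z.2)) '' triPts a (b % a) ∪
        triPts' a (b / a * a) := by
  rw [Int.emod_def, mul_comm a]
  exact triPts_eq_shear_image_union ha (Int.ediv_nonneg (by linarith) ha.le)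
    (Int.ediv_mul_le b ha.ne')
end

section
/- Let a, b be integers with 1 ≤ b < a and let s : ℤ → ℤ be a periodic 0,1-sequence whose minimal period is a and with 𝟙(s) = b. Then s ≡ B_{a,b} (i.e. s is a shift of the Sturmian sequence B_{a,b}) if and only if the 1s in s are evenly distributed, i.e. for all integers x₀ ≤ x₁, writing l = x₁ − x₀ + 1 and t = #{n ∈ ℤ : x₀ ≤ n ≤ x₁ and s(n) = 1}, one has t ∈ {⌊b·l/a⌋, ⌈b·l/a⌉}. -/
/-!
A shift of the Beatty sequence telescopes: its sum over a window of length `l` is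
`⌊θ + φ⌋ - ⌊φ⌋` with `θ = b l / a`, which is `⌊θ⌋` or `⌈θ⌉`. Conversely, if every window is
balanced and `S` is a prefix sum of `s`, the discrepancy `a S(n) - b n` varies by less than `a`.
At a point `n₀` where it is maximal this forces `S(n) - S(n₀) = ⌊b (n - n₀) / a⌋` for all `n`,
so `s` is the Beatty sequence shifted by `n₀ - 1`.
-/

/-- The Beatty sequence `B_{a,b}(n) = ⌊b·n/a⌋ − ⌊b·(n−1)/a⌋`. -/
def beatty (a b n : ℤ) : ℤ := ⌊(b * n : ℚ) / a⌋ - ⌊(b * (n - 1) : ℚ) / a⌋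

open Finset

section Floor

variable {R : Type*} [CommRing R] [LinearOrder R] [IsStrictOrderedRing R] [FloorRing R]

theorem Int.floor_add_sub_floor_eq_floor_or_ceil (θ φ : R) :
    ⌊θ + φ⌋ - ⌊φ⌋ = ⌊θ⌋ ∨ ⌊θ + φ⌋ - ⌊φ⌋ = ⌈θ⌉ := by
  have h₁ : ⌊θ⌋ + ⌊φ⌋ ≤ ⌊θ + φ⌋ := Int.le_floor_add θ φ
  have h₂ : ⌊θ + φ⌋ ≤ ⌈θ⌉ + ⌊φ⌋ := by
    rw [← Int.floor_intCast_add]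
    exact Int.floor_le_floor (by linarith [Int.le_ceil θ])
  have h₃ : ⌈θ⌉ ≤ ⌊θ⌋ + 1 := Int.ceil_le_floor_add_one θ
  omega

theorem Int.abs_sub_lt_one_of_eq_floor_or_ceil {t : ℤ} {q : R} (h : t = ⌊q⌋ ∨ t = ⌈q⌉) :
    |(t : R) - q| < 1 := by
  rw [abs_sub_lt_iff]
  rcases h with rfl | rfl
  · constructor <;> linarith [Int.floor_le q, Int.lt_floor_add_one q]
  · constructor <;> linarith [Int.le_ceil q, Int.ceil_lt_add_one q]

end Floor

theorem Int.abs_mul_sub_lt_of_eq_floor_or_ceil {a t X : ℤ} (ha : 0 < a)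
    (h : t = ⌊(X / a : ℚ)⌋ ∨ t = ⌈(X / a : ℚ)⌉) : |a * t - X| < a := by
  have ha' : (0 : ℚ) < a := by exact_mod_cast ha
  have key : |(a * t - X : ℚ)| < a :=
    calc |(a * t - X : ℚ)| = |(a * (t - X / a) : ℚ)| := by rw [mul_sub, mul_div_cancel₀ _ ha'.ne']
      _ = a * |(t - X / a : ℚ)| := by rw [abs_mul, abs_of_pos ha']
      _ < a * 1 := by gcongr; exact Int.abs_sub_lt_one_of_eq_floor_or_ceil h
      _ = a := mul_one _
  exact_mod_cast key

section Telescope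

variable {M : Type*} [AddCommGroup M]

theorem Int.sum_Ico_sub (G : ℤ → M) {x y : ℤ} (h : x ≤ y) :
    ∑ k ∈ Ico x y, (G (k + 1) - G k) = G y - G x := by
  induction y, h using Int.leInduction with
  | base => simp
  | succ y hxy ih =>
    rw [Ico_add_one_right_eq_Icc, ← Ico_insert_right hxy, sum_insert (by simp), ih]
    abel

theorem Int.exists_add_one_sub_eq (f : ℤ → M) : ∃ S : ℤ → M, ∀ n, S (n + 1) - S n = f n := by
  refine ⟨fun n => ∑ k ∈ Ico 0 n, f k - ∑ k ∈ Ico n 0, f k, fun n => ?_⟩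
  dsimp only
  rcases le_or_gt 0 n with hn | hn
  · rw [Ico_eq_empty_of_le (a := n) hn, Ico_eq_empty_of_le (a := n + 1) (by omega),
      Ico_add_one_right_eq_Icc, ← Ico_insert_right hn, sum_insert (by simp)]
    simp
  · rw [Ico_eq_empty_of_le (b := n) hn.le, Ico_eq_empty_of_le (b := n + 1) (by omega),
      ← insert_Ico_add_one_left_eq_Ico hn, sum_insert (by simp)]
    simp

end Telescope

theorem card_filter_eq_one_eq_sum {s : ℤ → ℤ} (h01 : ∀ n, s n = 0 ∨ s n = 1) (T : Finset ℤ) :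
    ((T.filter fun n => s n = 1).card : ℤ) = ∑ n ∈ T, s n := by
  rw [natCast_card_filter]
  refine sum_congr rfl fun n _ => ?_
  rcases h01 n with h | h <;> simp [h]

theorem sum_Icc_eq_floor_or_ceil_of_shift_eq_beatty {a b i : ℤ} {f : ℤ → ℤ}
    (hf : ∀ n, f (n + i) = beatty a b n) {x₀ x₁ : ℤ} (h : x₀ ≤ x₁) :
    ∑ k ∈ Icc x₀ x₁, f k = ⌊(b * (x₁ - x₀ + 1) : ℚ) / a⌋ ∨
      ∑ k ∈ Icc x₀ x₁, f k = ⌈(b * (x₁ - x₀ + 1) : ℚ) / a⌉ := by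
  set G : ℤ → ℤ := fun k => ⌊(b * (k - 1 - i) : ℚ) / a⌋
  have hfG : ∀ k, f k = G (k + 1) - G k := by
    intro k
    rw [← sub_add_cancel k i, hf, beatty]
    simp only [G]
    push_cast
    ring_nf
  have hsum : ∑ k ∈ Icc x₀ x₁, f k = G (x₁ + 1) - G x₀ := by
    rw [sum_congr rfl fun k _ => hfG k, ← Ico_add_one_right_eq_Icc, Int.sum_Ico_sub G (by omega)]
  have key := Int.floor_add_sub_floor_eq_floor_or_ceil ((b * (x₁ - x₀ + 1) : ℚ) / a)
    ((b * (x₀ - 1 - i) : ℚ) / a)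
  rwa [← add_div, show (b * (x₁ - x₀ + 1) + b * (x₀ - 1 - i) : ℚ) = b * ((x₁ + 1 : ℤ) - 1 - i) by
    push_cast; ring, ← hsum] at key

theorem exists_eq_add_floor_of_abs_sub_lt {a b : ℤ} (ha : 0 < a) {S : ℤ → ℤ}
    (hS : ∀ x y, x ≤ y → |a * (S y - S x) - b * (y - x)| < a) :
    ∃ n₀, ∀ n, S n = S n₀ + ⌊(b * (n - n₀) : ℚ) / a⌋ := by
  set d : ℤ → ℤ := fun n => a * S n - b * n
  have hd : ∀ x y, d y - d x < a := by
    intro x y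
    rcases le_total x y with h | h
    · linarith [(abs_lt.1 (hS x y h)).2]
    · linarith [(abs_lt.1 (hS y x h)).1]
  obtain ⟨_, ⟨n₀, rfl⟩, hmax⟩ := Int.exists_greatest_of_bdd (P := (· ∈ Set.range d))
    ⟨d 0 + a, by rintro _ ⟨n, rfl⟩; linarith [hd 0 n]⟩ ⟨d 0, 0, rfl⟩
  refine ⟨n₀, fun n => ?_⟩
  have hle : d n ≤ d n₀ := hmax _ ⟨n, rfl⟩
  have hlt : d n₀ - d n < a := hd n n₀
  have ha' : (0 : ℚ) < a := by exact_mod_cast ha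
  rw [← sub_eq_iff_eq_add', eq_comm, Int.floor_eq_iff, le_div_iff₀ ha', div_lt_iff₀ ha']
  constructor
  · exact_mod_cast (by linarith : (S n - S n₀) * a ≤ b * (n - n₀))
  · exact_mod_cast (by linarith : b * (n - n₀) < (S n - S n₀ + 1) * a)

theorem exists_shift_eq_beatty_of_sum_Icc_eq_floor_or_ceil {a b : ℤ} (ha : 0 < a) {f : ℤ → ℤ}
    (hf : ∀ x₀ x₁, x₀ ≤ x₁ → ∑ k ∈ Icc x₀ x₁, f k = ⌊(b * (x₁ - x₀ + 1) : ℚ) / a⌋ ∨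
      ∑ k ∈ Icc x₀ x₁, f k = ⌈(b * (x₁ - x₀ + 1) : ℚ) / a⌉) :
    ∃ i, ∀ n, f (n + i) = beatty a b n := by
  obtain ⟨S, hS⟩ := Int.exists_add_one_sub_eq f
  have hbal : ∀ x y, x ≤ y → |a * (S y - S x) - b * (y - x)| < a := by
    intro x y hxy
    rcases hxy.eq_or_lt with rfl | hlt
    · simpa using ha
    have hsum : ∑ k ∈ Icc x (y - 1), f k = S y - S x := by
      simp_rw [← hS]
      rw [← Ico_add_one_right_eq_Icc, sub_add_cancel, Int.sum_Ico_sub S hxy]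
    have h := hf x (y - 1) (by omega)
    rw [hsum, show (b * ((y - 1 : ℤ) - x + 1) : ℚ) = ((b * (y - x) : ℤ) : ℚ) by push_cast; ring]
      at h
    exact Int.abs_mul_sub_lt_of_eq_floor_or_ceil ha h
  obtain ⟨n₀, hn₀⟩ := exists_eq_add_floor_of_abs_sub_lt ha hbal
  refine ⟨n₀ - 1, fun n => ?_⟩
  rw [← hS, hn₀, hn₀ (n + (n₀ - 1)), beatty]
  push_cast
  ring_nf

theorem stmt15_general (a b : ℤ) (hb : 1 ≤ b) (hba : b < a) (s : ℤ → ℤ)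
    (h01 : ∀ n : ℤ, s n = 0 ∨ s n = 1) :
    (∃ i : ℤ, ∀ n : ℤ, s (n + i) = beatty a b n) ↔
      (∀ x₀ x₁ : ℤ, x₀ ≤ x₁ →
        ((((Finset.Icc x₀ x₁).filter fun n => s n = 1).card : ℤ) =
            ⌊(b * (x₁ - x₀ + 1) : ℚ) / a⌋ ∨
          (((Finset.Icc x₀ x₁).filter fun n => s n = 1).card : ℤ) =
            ⌈(b * (x₁ - x₀ + 1) : ℚ) / a⌉)) := by
  simp only [card_filter_eq_one_eq_sum h01]
  exact ⟨fun ⟨_, hi⟩ _ _ => sum_Icc_eq_floor_or_ceil_of_shift_eq_beatty hi,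
    exists_shift_eq_beatty_of_sum_Icc_eq_floor_or_ceil (by omega)⟩

theorem stmt15 (a b : ℤ) (hb : 1 ≤ b) (hba : b < a) (s : ℤ → ℤ)
    (h01 : ∀ n : ℤ, s n = 0 ∨ s n = 1)
    (hper : ∀ n : ℤ, s (n + a) = s n)
    (hmin : ∀ p : ℤ, 0 < p → p < a → ¬ (∀ n : ℤ, s (n + p) = s n))
    (hones : (((Finset.Icc 0 (a - 1)).filter fun n => s n = 1).card : ℤ) = b) :
    (∃ i : ℤ, ∀ n : ℤ, s (n + i) = beatty a b n) ↔
      (∀ x₀ x₁ : ℤ, x₀ ≤ x₁ →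
        ((((Finset.Icc x₀ x₁).filter fun n => s n = 1).card : ℤ) =
            ⌊(b * (x₁ - x₀ + 1) : ℚ) / a⌋ ∨
          (((Finset.Icc x₀ x₁).filter fun n => s n = 1).card : ℤ) =
            ⌈(b * (x₁ - x₀ + 1) : ℚ) / a⌉)) :=
  stmt15_general a b hb hba s h01
end

section
/- Let a, b be integers with 1 ≤ b < a and let s : ℤ → ℤ be a periodic 0,1-sequence whose minimal period is a and with 𝟙(s) = b. Then s ≡ B_{a,b} (i.e. s is a shift of the Sturmian sequence B_{a,b}) if and only if s is swap symmetric. -/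
/-- `swapSeq s p i` decreases `s` by one at positions `≡ i (mod p)` and
increases it by one at positions `≡ i + 1 (mod p)`. -/
def swapSeq (s : ℤ → ℤ) (p i : ℤ) : ℤ → ℤ := fun n =>
  if p ∣ n - i then s n - 1 else if p ∣ n - (i + 1) then s n + 1 else s n

/-!
Write `B_{a,b}(n) = b n / a - b (n - 1) / a` with integer division. If `b v ≡ 1 (mod a)`, then
`B_{a,b}(n + v) = B_{a,b}(n) + [a ∣ n + v] - [a ∣ n + v - 1]`, i.e. shifting by `v` is the swap at
`0`; minimality of the period forces `gcd(a, b) = 1`, which provides such a `v`.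

Conversely, let `F` be a discrete antiderivative of `s`, so that `F (n + a) = F n + b`. A symmetry
`swap_i(s)(n + j) = s(n)` makes `a (F (n + j) - F n) - b j - a [a ∣ n + j - i - 1]` constant, and
summing over a period shows that the constant is `-1`. Hence `b j ≡ 1 (mod a)`, and
`F n - b (n - i - 1) / a` has both periods `a` and `j`, so it is constant: this says
`s (n + i) = B_{a,b}(n)`.
-/

open Finset Function

theorem Int.add_one_ediv {a : ℤ} (ha : 0 < a) (x : ℤ) :
    (x + 1) / a = x / a + if a ∣ x + 1 then 1 else 0 := by
  have hx := Int.emod_add_mul_ediv x a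
  have hr := Int.emod_nonneg x ha.ne'
  rcases (show x % a + 1 = a ∨ x % a + 1 < a by have := Int.emod_lt_of_pos x ha; omega)
    with hlast | hlt
  · have hx1 : x + 1 = a * (x / a + 1) := by linarith
    rw [if_pos ⟨_, hx1⟩, hx1, Int.mul_ediv_cancel_left _ ha.ne']
  · have h := ((Int.ediv_emod_unique ha).2 ⟨by linarith, by omega, hlt⟩ :
      (x + 1) / a = x / a ∧ (x + 1) % a = x % a + 1)
    rw [h.1, if_neg (by rw [Int.dvd_iff_emod_eq_zero, h.2]; omega), add_zero]

theorem Int.dvd_mul_add_one_iff {a b v : ℤ} (hbv : a ∣ b * v - 1) (x : ℤ) :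
    a ∣ b * x + 1 ↔ a ∣ x + v := by
  obtain ⟨m, hm⟩ := hbv
  have hco : IsCoprime a b := ⟨-m, v, by linear_combination hm⟩
  rw [← dvd_add_right (dvd_mul_right a m), show a * m + (b * x + 1) = b * (x + v) by
    linear_combination -hm]
  exact ⟨hco.dvd_of_dvd_mul_left, fun h => h.mul_left b⟩

theorem Int.sum_Ico_ite_dvd_sub {a : ℤ} (ha : 0 < a) (c : ℤ) :
    ∑ n ∈ Ico 0 a, (if a ∣ n - c then 1 else 0 : ℤ) = 1 := by
  have key : ∀ n ∈ Ico 0 a, (a ∣ n - c ↔ n = c % a) := by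
    intro n hn
    rw [mem_Ico] at hn
    rw [← Int.modEq_iff_dvd, Int.ModEq, Int.emod_eq_of_lt hn.1 hn.2, eq_comm]
  rw [sum_congr rfl fun n hn => if_congr (key n hn) rfl rfl, sum_ite_eq']
  simp [Int.emod_nonneg c ha.ne', Int.emod_lt_of_pos c ha]

theorem Finset.sum_eq_card_filter_eq_one {ι : Type*} (t : Finset ι) {s : ι → ℤ}
    (h01 : ∀ n ∈ t, s n = 0 ∨ s n = 1) : ∑ n ∈ t, s n = #(t.filter fun n => s n = 1) := by
  rw [natCast_card_filter]
  refine sum_congr rfl fun n hn => ?_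
  rcases h01 n hn with h | h <;> simp [h]

theorem Function.Periodic.sum_Ico_add {M : Type*} [AddCommGroup M] {f : ℤ → M} {a : ℤ}
    (hf : Periodic f a) (ha : 0 ≤ a) (c : ℤ) :
    ∑ n ∈ Ico 0 a, f (n + c) = ∑ n ∈ Ico 0 a, f n := by
  have h1 : Periodic (fun c => ∑ n ∈ Ico 0 a, f (n + c)) 1 := by
    intro c
    have hshift : ∑ n ∈ Ico 0 a, f (n + (c + 1)) = ∑ n ∈ Ico (0 + 1) (a + 1), f (n + c) := by
      rw [← sum_Ico_add']
      exact sum_congr rfl fun n _ => by rw [add_right_comm, add_assoc]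
    have hbot : ∑ n ∈ Ico 0 (a + 1), f (n + c) =
        f (0 + c) + ∑ n ∈ Ico (0 + 1) (a + 1), f (n + c) := by
      rw [← insert_Ico_add_one_left_eq_Ico (by omega), sum_insert (by simp)]
    have htop : ∑ n ∈ Ico 0 (a + 1), f (n + c) = f (a + c) + ∑ n ∈ Ico 0 a, f (n + c) := by
      rw [← insert_Ico_right_eq_Ico_add_one ha, sum_insert (by simp)]
    rw [add_comm a c, hf c, hbot, zero_add] at htop
    simpa only [hshift] using add_left_cancel htop
  simpa using h1.int_mul_eq c

noncomputable def partialSum (s : ℤ → ℤ) (n : ℤ) : ℤ := ∑ k ∈ Ico 0 n, s k - ∑ k ∈ Ico n 0, s k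

theorem partialSum_add_one (s : ℤ → ℤ) (n : ℤ) :
    partialSum s (n + 1) = partialSum s n + s n := by
  unfold partialSum
  rcases le_or_gt 0 n with hn | hn
  · rw [← insert_Ico_right_eq_Ico_add_one hn, sum_insert (by simp), Ico_eq_empty_of_le hn,
      Ico_eq_empty_of_le (show 0 ≤ n + 1 by omega)]
    ring
  · rw [← insert_Ico_add_one_left_eq_Ico hn, sum_insert (by simp), Ico_eq_empty_of_le hn.le,
      Ico_eq_empty_of_le (show n + 1 ≤ 0 by omega)]
    ring

theorem partialSum_add_period {s : ℤ → ℤ} {a : ℤ} (hs : Periodic s a) (ha : 0 ≤ a) (n : ℤ) :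
    partialSum s (n + a) = partialSum s n + ∑ k ∈ Ico 0 a, s k := by
  have h1 : Periodic (fun n => partialSum s (n + a) - partialSum s n) 1 := fun n => by
    simp only [add_right_comm n 1 a, partialSum_add_one, hs n]
    ring
  have h := h1.int_mul_eq n
  simp only [Int.cast_id, mul_one, zero_add] at h
  have ha' : partialSum s a = ∑ k ∈ Ico 0 a, s k := by
    simp [partialSum, Ico_eq_empty_of_le ha]
  rw [ha', show partialSum s 0 = 0 by simp [partialSum]] at h
  linarith

theorem beatty_eq_ediv {a : ℤ} (ha : 0 < a) (b n : ℤ) :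
    beatty a b n = b * n / a - b * (n - 1) / a := by
  lift a to ℕ using ha.le
  simp only [beatty, ← Rat.floor_intCast_div_natCast]
  push_cast
  rfl

theorem beatty_periodic {a b p : ℤ} (ha : 0 < a) (hp : a ∣ b * p) : Periodic (beatty a b) p := by
  obtain ⟨q, hq⟩ := hp
  intro n
  rw [beatty_eq_ediv ha, beatty_eq_ediv ha,
    show b * (n + p) = b * n + q * a by linear_combination hq,
    show b * (n + p - 1) = b * (n - 1) + q * a by linear_combination hq,
    Int.add_mul_ediv_right _ _ ha.ne', Int.add_mul_ediv_right _ _ ha.ne']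
  ring

theorem beatty_add_of_dvd {a b v : ℤ} (ha : 0 < a) (hbv : a ∣ b * v - 1) (n : ℤ) :
    beatty a b (n + v) =
      beatty a b n + (if a ∣ n + v then 1 else 0) - (if a ∣ n + v - 1 then 1 else 0) := by
  obtain ⟨m, hm⟩ := id hbv
  rw [beatty_eq_ediv ha, beatty_eq_ediv ha,
    show b * (n + v) = b * n + 1 + m * a by linear_combination hm,
    show b * (n + v - 1) = b * (n - 1) + 1 + m * a by linear_combination hm,
    Int.add_mul_ediv_right _ _ ha.ne', Int.add_mul_ediv_right _ _ ha.ne',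
    Int.add_one_ediv ha, Int.add_one_ediv ha]
  simp only [Int.dvd_mul_add_one_iff hbv, sub_add_eq_add_sub]
  ring

theorem swapSeq_apply {p : ℤ} (hp : 1 < p) (s : ℤ → ℤ) (i m : ℤ) :
    swapSeq s p i m =
      s m - (if p ∣ m - i then 1 else 0) + (if p ∣ m - (i + 1) then 1 else 0) := by
  unfold swapSeq
  split_ifs with h1 h2 h2
  · have := Int.le_of_dvd one_pos (by simpa using dvd_sub h1 h2)
    omega
  all_goals ring

theorem swapSeq_comp_add (s : ℤ → ℤ) (p i c n : ℤ) :
    swapSeq (fun m => s (m + c)) p i n = swapSeq s p (i + c) (n + c) := by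
  simp only [swapSeq, show n + c - (i + c) = n - i by ring,
    show n + c - (i + c + 1) = n - (i + 1) by ring]

theorem swapSeq_beatty_add {a b v : ℤ} (ha : 1 < a) (hbv : a ∣ b * v - 1) (n : ℤ) :
    swapSeq (beatty a b) a 0 (n + v) = beatty a b n := by
  rw [swapSeq_apply ha, beatty_add_of_dvd (by omega) hbv, sub_zero, zero_add]
  ring

theorem isCoprime_of_minimal_period {a b i : ℤ} {s : ℤ → ℤ} (ha : 0 < a)
    (h : ∀ n, s (n + i) = beatty a b n)
    (hmin : ∀ p : ℤ, 0 < p → p < a → ¬ (∀ n : ℤ, s (n + p) = s n)) : IsCoprime a b := by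
  rw [Int.isCoprime_iff_gcd_eq_one]
  by_contra hd
  obtain ⟨p, hp⟩ := Int.gcd_dvd_left a b
  obtain ⟨q, hq⟩ := Int.gcd_dvd_right a b
  have hd2 : 2 ≤ (Int.gcd a b : ℤ) := by
    have := Int.gcd_pos_of_ne_zero_left b ha.ne'
    omega
  refine hmin p (by nlinarith) (by nlinarith) fun n => ?_
  have hper := beatty_periodic (b := b) (p := p) ha
    ⟨q, by linear_combination p * hq - q * hp⟩ (n - i)
  rwa [← h, ← h, sub_add_cancel, add_right_comm, sub_add_cancel] at hper

theorem exists_swapSeq_of_beatty {a b i : ℤ} {s : ℤ → ℤ} (ha : 1 < a) (hco : IsCoprime a b)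
    (h : ∀ n, s (n + i) = beatty a b n) : ∃ i j : ℤ, ∀ n : ℤ, swapSeq s a i (n + j) = s n := by
  obtain ⟨u, v, huv⟩ := hco
  have hs : s = fun m => beatty a b (m + -i) := funext fun m => by rw [← h, neg_add_cancel_right]
  refine ⟨i, v, fun n => ?_⟩
  rw [hs, swapSeq_comp_add, add_neg_cancel, add_right_comm,
    swapSeq_beatty_add ha ⟨-u, by linear_combination huv⟩]

theorem mul_sub_eq_of_swapSeq {a b i j : ℤ} {s F : ℤ → ℤ} (ha : 1 < a)
    (hF : ∀ n, F (n + 1) = F n + s n) (hFa : ∀ n, F (n + a) = F n + b)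
    (hsw : ∀ n, swapSeq s a i (n + j) = s n) (n : ℤ) :
    a * (F (n + j) - F n) = b * j - 1 + a * if a ∣ n + j - (i + 1) then 1 else 0 := by
  set e : ℤ → ℤ := fun m => if a ∣ m - (i + 1) then 1 else 0 with he
  set D : ℤ → ℤ := fun n => a * (F (n + j) - F n) - b * j - a * e (n + j) with hD
  have hg : Periodic (fun n => a * F n - b * n) a := fun n => by simp only [hFa]; ring
  have hD1 : Periodic D 1 := fun n => by
    have h := hsw n
    rw [swapSeq_apply ha] at h
    simp only [hD, he, add_right_comm n 1 j, hF,
      show n + j + 1 - (i + 1) = n + j - i by ring]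
    linear_combination a * h
  have hsum : ∑ n ∈ Ico 0 a, D n = -a := by
    have he1 : ∑ n ∈ Ico 0 a, e (n + j) = 1 := by
      simpa only [he, show ∀ n, n + j - (i + 1) = n - (i + 1 - j) from fun n => by ring]
        using Int.sum_Ico_ite_dvd_sub (by omega) (i + 1 - j)
    have hg0 : ∑ n ∈ Ico 0 a, (a * F (n + j) - b * (n + j)) = ∑ n ∈ Ico 0 a, (a * F n - b * n) :=
      hg.sum_Ico_add (by omega) j
    have hD' : ∀ n, D n = (a * F (n + j) - b * (n + j)) - (a * F n - b * n) - a * e (n + j) :=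
      fun n => by simp only [hD]; ring
    rw [sum_congr rfl fun n _ => hD' n, sum_sub_distrib, sum_sub_distrib, hg0, ← mul_sum, he1]
    ring
  have hconst : ∀ n, D n = D 0 := fun n => by simpa using hD1.int_mul_eq n
  rw [sum_congr rfl fun n _ => hconst n, sum_const, Int.card_Ico, sub_zero, nsmul_eq_mul,
    Int.toNat_of_nonneg (by omega)] at hsum
  have hD0 : D 0 = -1 := mul_left_cancel₀ (show a ≠ 0 by omega) (by linarith)
  have := (hconst n).trans hD0
  simp only [hD, he] at this
  linarith

theorem beatty_of_swapSeq {a b i j : ℤ} {s F : ℤ → ℤ} (ha : 1 < a)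
    (hF : ∀ n, F (n + 1) = F n + s n) (hFa : ∀ n, F (n + a) = F n + b)
    (hsw : ∀ n, swapSeq s a i (n + j) = s n) (n : ℤ) : s (n + i) = beatty a b n := by
  have ha0 : 0 < a := by omega
  have hshift := mul_sub_eq_of_swapSeq ha hF hFa hsw
  have hbj : a ∣ b * j - 1 :=
    ⟨F (0 + j) - F 0 - if a ∣ 0 + j - (i + 1) then 1 else 0, by linear_combination -(hshift 0)⟩
  obtain ⟨m, hm⟩ := id hbj
  set φ : ℤ → ℤ := fun n => F n - b * (n - (i + 1)) / a with hφ
  have hφa : Periodic φ a := fun n => by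
    simp only [hφ, hFa, show b * (n + a - (i + 1)) = b * (n - (i + 1)) + b * a by ring,
      Int.add_mul_ediv_right _ _ ha0.ne']
    ring
  have hφj : Periodic φ j := fun n => by
    have hFj : F (n + j) - F n = m + if a ∣ n + j - (i + 1) then 1 else 0 :=
      mul_left_cancel₀ ha0.ne' (by linear_combination hshift n + hm)
    simp only [hφ, show b * (n + j - (i + 1)) = b * (n - (i + 1)) + 1 + m * a by
      linear_combination hm, Int.add_mul_ediv_right _ _ ha0.ne', Int.add_one_ediv ha0,
      Int.dvd_mul_add_one_iff hbj, show n - (i + 1) + j = n + j - (i + 1) by ring]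
    linear_combination hFj
  have hφ1 : Periodic φ 1 := by
    have := (hφj.int_mul b).sub_period (hφa.int_mul m)
    rwa [Int.cast_id, Int.cast_id, show b * j - m * a = 1 by linear_combination hm] at this
  have hφc : ∀ n, φ n = φ 0 := fun n => by simpa using hφ1.int_mul_eq n
  have h1 := hφc (n + i + 1)
  have h2 := hφc (n + i)
  simp only [hφ, show n + i + 1 - (i + 1) = n by ring,
    show n + i - (i + 1) = n - 1 by ring] at h1 h2
  rw [beatty_eq_ediv ha0]
  linear_combination -hF (n + i) + h1 - h2

theorem stmt16 (a b : ℤ) (hb : 1 ≤ b) (hba : b < a) (s : ℤ → ℤ)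
    (h01 : ∀ n : ℤ, s n = 0 ∨ s n = 1)
    (hper : ∀ n : ℤ, s (n + a) = s n)
    (hmin : ∀ p : ℤ, 0 < p → p < a → ¬ (∀ n : ℤ, s (n + p) = s n))
    (hones : (((Finset.Icc 0 (a - 1)).filter fun n => s n = 1).card : ℤ) = b) :
    (∃ i : ℤ, ∀ n : ℤ, s (n + i) = beatty a b n) ↔
      (∃ i j : ℤ, ∀ n : ℤ, swapSeq s a i (n + j) = s n) := by
  constructor
  · rintro ⟨i, h⟩
    exact exists_swapSeq_of_beatty (by omega) (isCoprime_of_minimal_period (by omega) h hmin) h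
  · rintro ⟨i, j, hsw⟩
    have hsum : ∑ k ∈ Ico 0 a, s k = b := by
      rw [← hones, ← sum_eq_card_filter_eq_one _ fun n _ => h01 n,
        ← Ico_add_one_right_eq_Icc, sub_add_cancel]
    exact ⟨i, beatty_of_swapSeq (by omega) (partialSum_add_one s)
      (fun n => by rw [partialSum_add_period hper (by omega), hsum]) hsw⟩
end

section
/- Let s : ℤ → ℤ be a periodic sequence with minimal period P(s) ≥ 2. If s is swap symmetric, then s is balanced: there exists k ∈ ℤ such that s(n) ∈ {k, k+1} for all n ∈ ℤ. -/
/-!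
Write the swap position as `a + j`. Swap symmetry says that `s (n + j) - s n` is `1` for
`n ≡ a`, `-1` for `n ≡ a + 1` and `0` otherwise (mod `p`). Along the orbit `a, a + j, a + 2j, …`
the values can therefore only increase until the orbit meets `a + 1`; since they rise at the
first step and return to `s a` after `p` steps, the orbit does meet `a + 1`, so `j` is a unit
mod `p`, and it meets `a + 1` before returning to `a`, with value `s a + 1`. Knowing
`s (a + 1) = s a + 1`, the property `s n ∈ {s a, s a + 1}` is invariant under `n ↦ n + j`, hence
holds everywhere.
-/

theorem Function.Periodic.apply_add_of_dvd {β : Type*} {f : ℤ → β} {c m : ℤ}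
    (h : Function.Periodic f c) (hm : c ∣ m) (x : ℤ) : f (x + m) = f x := by
  obtain ⟨k, rfl⟩ := hm
  rw [mul_comm]
  exact h.int_mul k x

namespace SwapSymmetric

variable {s : ℤ → ℤ} {p a j n : ℤ}

theorem apply_add_eq_add_one (hs : ∀ n, swapSeq s p (a + j) (n + j) = s n)
    (h : p ∣ n - a) : s (n + j) = s n + 1 := by
  have := hs n
  rw [swapSeq, if_pos (by rwa [add_sub_add_right_eq_sub])] at this
  omega

theorem apply_add_eq_sub_one (hs : ∀ n, swapSeq s p (a + j) (n + j) = s n)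
    (h₁ : ¬ p ∣ n - a) (h₂ : p ∣ n - (a + 1)) : s (n + j) = s n - 1 := by
  have := hs n
  rw [swapSeq, if_neg (by rwa [add_sub_add_right_eq_sub]),
    if_pos (by rwa [show n + j - (a + j + 1) = n - (a + 1) by ring])] at this
  omega

theorem apply_add_eq_self (hs : ∀ n, swapSeq s p (a + j) (n + j) = s n)
    (h₁ : ¬ p ∣ n - a) (h₂ : ¬ p ∣ n - (a + 1)) : s (n + j) = s n := by
  have := hs n
  rwa [swapSeq, if_neg (by rwa [add_sub_add_right_eq_sub]),
    if_neg (by rwa [show n + j - (a + j + 1) = n - (a + 1) by ring])] at this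

theorem le_apply_add (hs : ∀ n, swapSeq s p (a + j) (n + j) = s n)
    (h : ¬ p ∣ n - (a + 1)) : s n ≤ s (n + j) := by
  by_cases ha : p ∣ n - a
  · rw [apply_add_eq_add_one hs ha]; omega
  · rw [apply_add_eq_self hs ha h]

theorem add_natCast_succ_mul (k : ℕ) : a + ((k + 1 : ℕ) : ℤ) * j = a + k * j + j := by
  push_cast; ring

theorem exists_dvd_mul_sub_one (hp : 0 < p) (hper : Function.Periodic s p)
    (hs : ∀ n, swapSeq s p (a + j) (n + j) = s n) : ∃ t : ℕ, p ∣ t * j - 1 := by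
  by_contra! hmiss
  have hmono : Monotone fun k : ℕ => s (a + k * j) := by
    refine monotone_nat_of_le_succ fun k => ?_
    rw [add_natCast_succ_mul]
    exact le_apply_add hs (by rw [show a + k * j - (a + 1) = k * j - 1 by ring]; exact hmiss k)
  have hfirst : s (a + ((1 : ℕ) : ℤ) * j) = s a + 1 := by
    simpa using apply_add_eq_add_one hs (n := a) (by simp)
  have hreturn : s (a + (p.toNat : ℤ) * j) = s a := by
    rw [Int.toNat_of_nonneg hp.le]
    exact hper.apply_add_of_dvd (dvd_mul_right p j) a
  have := hmono (show 1 ≤ p.toNat by omega)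
  simp only [hfirst, hreturn] at this
  omega

theorem apply_add_one (hp : 1 < p) (hper : Function.Periodic s p)
    (hs : ∀ n, swapSeq s p (a + j) (n + j) = s n) : s (a + 1) = s a + 1 := by
  have hex := exists_dvd_mul_sub_one (by omega) hper hs
  set t := Nat.find hex
  have ht : p ∣ t * j - 1 := Nat.find_spec hex
  have ht_pos : 1 ≤ t := by
    by_contra! h0
    rw [show t = 0 by omega, Nat.cast_zero, zero_mul, zero_sub, dvd_neg] at ht
    have := Int.le_of_dvd one_pos ht
    omega
  -- Before first meeting `a + 1` the orbit cannot meet `a`, where the value would drop to `s a`.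
  have hconst : ∀ k, 1 ≤ k → k ≤ t → s (a + k * j) = s a + 1 := by
    intro k hk
    induction k, hk using Nat.le_induction with
    | base => intro; simpa using apply_add_eq_add_one hs (n := a) (by simp)
    | succ k hk ih =>
      intro hkt
      have hval := ih (by omega)
      have hmiss₁ : ¬ p ∣ a + k * j - (a + 1) := by
        rw [show a + k * j - (a + 1) = k * j - 1 by ring]
        exact Nat.find_min hex (by omega)
      have hmiss₀ : ¬ p ∣ a + k * j - a := by
        rw [add_sub_cancel_left]
        intro hdvd
        have := hper.apply_add_of_dvd hdvd a
        omega
      rw [add_natCast_succ_mul, apply_add_eq_self hs hmiss₀ hmiss₁, hval]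
  calc s (a + 1) = s (a + t * j) := by
        rw [show a + t * j = a + 1 + (t * j - 1) by ring, hper.apply_add_of_dvd ht]
    _ = s a + 1 := hconst t ht_pos le_rfl

theorem apply_eq_or_eq_add_one (hp : 1 < p) (hper : Function.Periodic s p)
    (hs : ∀ n, swapSeq s p (a + j) (n + j) = s n) (n : ℤ) :
    s n = s a ∨ s n = s a + 1 := by
  set P : ℤ → Prop := fun n => s n = s a ∨ s n = s a + 1
  have hPp : Function.Periodic P p := fun n => by simp only [P, hper n]
  have hPj : Function.Periodic P j := by
    intro n
    by_cases h₀ : p ∣ n - a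
    · have hn : s n = s a := by simpa using hper.apply_add_of_dvd h₀ a
      simp [P, apply_add_eq_add_one hs h₀, hn]
    by_cases h₁ : p ∣ n - (a + 1)
    · have hn : s n = s a + 1 := by
        rw [← apply_add_one hp hper hs]
        simpa using hper.apply_add_of_dvd h₁ (a + 1)
      simp [P, apply_add_eq_sub_one hs h₀ h₁, hn]
    · simp only [P, apply_add_eq_self hs h₀ h₁]
  obtain ⟨t, c, htc⟩ := exists_dvd_mul_sub_one (by omega) hper hs
  have hP1 : Function.Periodic P 1 := by
    rw [show (1 : ℤ) = t * j - c * p by linarith]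
    exact (hPj.nat_mul t).sub_period (hPp.int_mul c)
  simpa [P] using (hP1.int_mul (n - a)) a

end SwapSymmetric

theorem stmt17_general (s : ℤ → ℤ) (p : ℤ) (hp : 2 ≤ p)
    (hper : ∀ n : ℤ, s (n + p) = s n)
    (hsym : ∃ i j : ℤ, ∀ n : ℤ, swapSeq s p i (n + j) = s n) :
    ∃ k : ℤ, ∀ n : ℤ, s n = k ∨ s n = k + 1 := by
  obtain ⟨i, j, hs⟩ := hsym
  obtain ⟨a, rfl⟩ : ∃ a, i = a + j := ⟨i - j, by ring⟩
  exact ⟨s a, SwapSymmetric.apply_eq_or_eq_add_one hp hper hs⟩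

theorem stmt17 (s : ℤ → ℤ) (p : ℤ) (hp : 2 ≤ p)
    (hper : ∀ n : ℤ, s (n + p) = s n)
    (hmin : ∀ q : ℤ, 0 < q → q < p → ¬ (∀ n : ℤ, s (n + q) = s n))
    (hsym : ∃ i j : ℤ, ∀ n : ℤ, swapSeq s p i (n + j) = s n) :
    ∃ k : ℤ, ∀ n : ℤ, s n = k ∨ s n = k + 1 :=
  stmt17_general s p hp hper hsym
end

section
/- Let n ≥ 2 and a, b, c be integers with 1 ≤ a, b, c ≤ n − 1 and a + b + c = n + 1. If B_{n,a}(k) + B_{n,b}(k) + B_{n,c}(k) = 1 for every integer k with 2 ≤ k ≤ n − 1, then a = 1 or b = 1 or c = 1. -/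
theorem beatty_eq_ediv_sub_ediv {n : ℤ} (hn : 0 < n) (x k : ℤ) :
    beatty n x k = x * k / n - x * (k - 1) / n := by
  lift n to ℕ using hn.le
  rw [beatty, ← Rat.floor_intCast_div_natCast, ← Rat.floor_intCast_div_natCast]
  push_cast
  rfl

namespace Int

theorem ediv_eq_of_eq_add_mul {u r q n : ℤ} (h : u = r + q * n) (hr : 0 ≤ r) (hrn : r < n) :
    u / n = q :=
  ((Int.ediv_emod_unique (by omega)).2 ⟨by rw [h, mul_comm], hr, hrn⟩).1

theorem ediv_le_ediv_of_mul_le_mul {u v n c : ℤ} (hn : 0 < n) (hc : 0 < c)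
    (h : u * c ≤ v * n) : u / n ≤ v / c := by
  refine Int.le_ediv_of_mul_le hc (le_of_mul_le_mul_right ?_ hn)
  calc u / n * c * n = u / n * n * c := by ring
    _ ≤ u * c := mul_le_mul_of_nonneg_right (Int.ediv_mul_le u hn.ne') hc.le
    _ ≤ v * n := h

theorem sub_one_le_ediv_add_ediv {n : ℤ} (hn : 0 < n) (x k : ℤ) :
    x - 1 ≤ x * k / n + x * (n - k) / n := by
  have h₁ := lt_ediv_add_one_mul_self (x * k) hn
  have h₂ := lt_ediv_add_one_mul_self (x * (n - k)) hn
  have : 0 < (x * k / n + x * (n - k) / n + 2 - x) * n := by nlinarith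
  nlinarith [pos_of_mul_pos_left this hn.le]

theorem exists_mul_eq_add_of_pos (u : ℤ) {c : ℤ} (hc : 0 < c) :
    ∃ p ρ, c * p = u + ρ ∧ 0 ≤ ρ ∧ ρ < c :=
  ⟨-(-u / c), -u % c, by linarith [emod_add_mul_ediv (-u) c], emod_nonneg _ hc.ne',
    emod_lt_of_pos _ hc⟩

end Int

/-- A fraction `t/m` in `[(D-1)/N, D/N]` with `2m < N`. -/
def HasSmallDenomFraction (N D : ℤ) : Prop :=
  ∃ m t : ℤ, 1 ≤ m ∧ 2 * m < N ∧ 0 ≤ D * m - t * N ∧ D * m - t * N ≤ m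

namespace HasSmallDenomFraction

theorem reflect {N D : ℤ} (h : HasSmallDenomFraction N D) :
    HasSmallDenomFraction N (N + 1 - D) := by
  obtain ⟨m, t, hm, hmN, h₀, h₁⟩ := h
  refine ⟨m, m - t, hm, hmN, ?_, ?_⟩ <;>
    linarith [show (N + 1 - D) * m - (m - t) * N = m - (D * m - t * N) by ring]

theorem of_sub {N D : ℤ} (hD : 0 < D) (h : HasSmallDenomFraction (N - D + 1) D) :
    HasSmallDenomFraction N D := by
  obtain ⟨m, t, hm, hmN, h₀, h₁⟩ := h
  have ht : 0 ≤ t := by nlinarith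
  have ht' : 2 * t < D := by nlinarith
  refine ⟨m + t, t, by omega, by omega, ?_, ?_⟩ <;>
    linarith [show D * (m + t) - t * N = D * m - t * (N - D + 1) + t by ring]

theorem of_le_two_mul {N D : ℤ} (hN : 5 ≤ N) (h₁ : N ≤ 2 * D) (h₂ : 2 * D ≤ N + 1) :
    HasSmallDenomFraction N D :=
  ⟨2, 1, by norm_num, by omega, by omega, by omega⟩

theorem of_three_le {N D : ℤ} (hD : 3 ≤ D) (hDN : D ≤ N - 2) : HasSmallDenomFraction N D := by
  have of_two_mul_le : ∀ E, 3 ≤ E → 2 * E ≤ N + 1 → HasSmallDenomFraction N E := by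
    intro E hE hEN
    rcases le_or_gt N (2 * E) with h | h
    · exact of_le_two_mul (by omega) h hEN
    · exact of_sub (by omega) (of_three_le hE (by omega))
  rcases le_or_gt (2 * D) (N + 1) with h | h
  · exact of_two_mul_le D hD h
  · simpa only [sub_sub_cancel] using (of_two_mul_le (N + 1 - D) (by omega) (by omega)).reflect
termination_by N.toNat
decreasing_by omega

end HasSmallDenomFraction

/-- The hypothesis `beatty n a k + beatty n b k + beatty n c k = 1`, summed over `k`. -/
def IsBeattyTriple (n a b c : ℤ) : Prop :=
  ∀ k, 1 ≤ k → k ≤ n - 1 → a * k / n + b * k / n + c * k / n = k - 1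

namespace IsBeattyTriple

variable {n a b c : ℤ}

theorem swap₁₃ (h : IsBeattyTriple n a b c) : IsBeattyTriple n c b a := fun k h₁ h₂ => by
  linarith [h k h₁ h₂]

theorem swap₂₃ (h : IsBeattyTriple n a b c) : IsBeattyTriple n a c b := fun k h₁ h₂ => by
  linarith [h k h₁ h₂]

theorem of_beatty (ha : 0 ≤ a) (ha' : a < n) (hb : 0 ≤ b) (hb' : b < n) (hc : 0 ≤ c)
    (hc' : c < n) (hf : ∀ k : ℤ, 2 ≤ k → k ≤ n - 1 →
      beatty n a k + beatty n b k + beatty n c k = 1) :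
    IsBeattyTriple n a b c := by
  intro k hk
  induction k, hk using Int.leInduction with
  | base =>
    intro _
    simp only [mul_one, Int.ediv_eq_zero_of_lt ha ha', Int.ediv_eq_zero_of_lt hb hb',
      Int.ediv_eq_zero_of_lt hc hc']
    norm_num
  | succ k hk ih =>
    intro hkn
    have hstep := hf (k + 1) (by omega) hkn
    simp only [beatty_eq_ediv_sub_ediv (by omega : 0 < n), add_sub_cancel_right] at hstep
    linarith [ih (by omega)]

theorem not_dvd_mul (hsum : a + b + c = n + 1) (h : IsBeattyTriple n a b c) {k : ℤ}
    (hk : 1 ≤ k) (hkn : k ≤ n - 1) : ¬ n ∣ c * k := by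
  rintro ⟨w, hw⟩
  have hn : 0 < n := by omega
  -- Pair `k` with `n - k`: each `x ∈ {a, b}` contributes at least `x - 1`, but `c` contributes `c`.
  have hc : c * k / n + c * (n - k) / n = c := by
    rw [hw, show c * (n - k) = n * (c - w) by linear_combination (-1 : ℤ) * hw,
      Int.mul_ediv_cancel_left _ hn.ne', Int.mul_ediv_cancel_left _ hn.ne']
    ring
  have hFk := h k hk hkn
  have hFnk := h (n - k) (by omega) (by omega)
  linarith [Int.sub_one_le_ediv_add_ediv hn a k, Int.sub_one_le_ediv_add_ediv hn b k]

theorem exists_lt_two_mul (hsum : a + b + c = n + 1) (h : IsBeattyTriple n a b c)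
    (hn : 3 ≤ n) (ha : 0 ≤ a) (hb : 0 ≤ b) (hc : 0 ≤ c) : n < 2 * a ∨ n < 2 * b ∨ n < 2 * c := by
  by_contra! hsmall
  have hzero : ∀ x, 0 ≤ x → 2 * x ≤ n → ¬ n ∣ x * 2 → x * 2 / n = 0 := fun x hx h₁ h₂ =>
    Int.ediv_eq_zero_of_lt (by omega) (lt_of_le_of_ne (by omega) fun h₃ => h₂ ⟨1, by omega⟩)
  have h₂ := h 2 (by norm_num) (by omega)
  rw [hzero a ha hsmall.1 (h.swap₁₃.not_dvd_mul (by omega) (by omega) (by omega)),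
    hzero b hb hsmall.2.1 (h.swap₂₃.not_dvd_mul (by omega) (by omega) (by omega)),
    hzero c hc hsmall.2.2 (h.not_dvd_mul hsum (by omega) (by omega))] at h₂
  omega

/-- From `k = p - 1` to `k = p = ⌈Jn/c⌉` only `⌊ck/n⌋` increases, which pins `⌊aJ/c⌋` and `⌊bJ/c⌋`
to `⌊ap/n⌋` and `⌊bp/n⌋`. -/
theorem reduce (h : IsBeattyTriple n a b c) (ha : 0 ≤ a) (hb : 0 ≤ b)
    (hcn : c < n) (hc : n < 2 * c) : IsBeattyTriple c a b (2 * c - n) := by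
  intro J hJ hJc
  have hc₀ : 0 < c := by omega
  have hn₀ : 0 < n := by omega
  obtain ⟨p, ρ, hp, hρ, hρc⟩ := Int.exists_mul_eq_add_of_pos (J * n) hc₀
  have hp₂ : 2 ≤ p := by nlinarith
  have hpn : p ≤ n - 1 := by nlinarith
  have hcp : c * p / n = J := Int.ediv_eq_of_eq_add_mul (by rw [hp]; ring) hρ (by omega)
  have hcp' : c * (p - 1) / n < J := (Int.ediv_lt_iff_lt_mul hn₀).2 (by linarith)
  have squeeze : ∀ x, 0 ≤ x → x * (p - 1) / n ≤ x * J / c ∧ x * J / c ≤ x * p / n :=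
    fun x hx => ⟨Int.ediv_le_ediv_of_mul_le_mul hn₀ hc₀ (by nlinarith),
      Int.ediv_le_ediv_of_mul_le_mul hc₀ hn₀ (by nlinarith)⟩
  have hnew : (2 * c - n) * J / c = 2 * J - p :=
    Int.ediv_eq_of_eq_add_mul (by linear_combination hp) hρ hρc
  have hFp := h p (by omega) hpn
  have hFp' := h (p - 1) (by omega) (by omega)
  linarith [squeeze a ha, squeeze b hb]

/-- Here `c` inverts `2` modulo `n`, so at `k = 2m` the identity forces `2am mod n > m`. -/
theorem false_of_two_mul_eq (hsum : a + b + c = n + 1) (h : IsBeattyTriple n a b c)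
    (ha : 2 ≤ a) (hb : 2 ≤ b) (hc : 2 * c = n + 1) : False := by
  obtain ⟨m, t, hm, hmn, h₀, h₁⟩ :=
    HasSmallDenomFraction.of_three_le (N := n) (D := 2 * a) (by omega) (by omega)
  have hF := h (2 * m) (by omega) (by omega)
  rw [Int.ediv_eq_of_eq_add_mul (show c * (2 * m) = m + m * n by linear_combination m * hc)
      (by omega) (by omega),
    Int.ediv_eq_of_eq_add_mul (show a * (2 * m) = (2 * a * m - t * n) + t * n by ring) h₀
      (by omega),
    Int.ediv_eq_of_eq_add_mul
      (show b * (2 * m) = (m - (2 * a * m - t * n)) + (m - t) * n by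
        linear_combination (2 * m) * hsum - m * hc) (by omega) (by omega)] at hF
  omega

end IsBeattyTriple

theorem IsBeattyTriple.eq_one_or_eq_one_or_eq_one {n a b c : ℤ} (hsum : a + b + c = n + 1)
    (h : IsBeattyTriple n a b c) (ha : 1 ≤ a) (hb : 1 ≤ b) (hc : 1 ≤ c) :
    a = 1 ∨ b = 1 ∨ c = 1 := by
  by_contra! hne
  wlog hbig : n < 2 * c generalizing a b c
  · rcases h.exists_lt_two_mul hsum (by omega) (by omega) (by omega) (by omega) with h' | h' | h'
    · exact this (by omega) h.swap₁₃ hc hb ha ⟨hne.2.2, hne.2.1, hne.1⟩ h'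
    · exact this (by omega) h.swap₂₃ ha hc hb ⟨hne.1, hne.2.2, hne.2.1⟩ h'
    · exact hbig h'
  have hred := h.reduce (by omega) (by omega) (by omega) hbig
  have hind := eq_one_or_eq_one_or_eq_one (by omega) hred (by omega) (by omega) (by omega)
  exact h.false_of_two_mul_eq hsum (by omega) (by omega) (by omega)
termination_by n.toNat
decreasing_by all_goals omega

theorem stmt19_general (n a b c : ℤ)
    (ha : 1 ≤ a) (hb : 1 ≤ b)
    (hc : 1 ≤ c) (hsum : a + b + c = n + 1)
    (hf : ∀ k : ℤ, 2 ≤ k → k ≤ n - 1 →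
      beatty n a k + beatty n b k + beatty n c k = 1) :
    a = 1 ∨ b = 1 ∨ c = 1 :=
  (IsBeattyTriple.of_beatty (by omega) (by omega) (by omega) (by omega) (by omega) (by omega)
    hf).eq_one_or_eq_one_or_eq_one hsum ha hb hc

theorem stmt19 (n a b c : ℤ) (hn : 2 ≤ n)
    (ha : 1 ≤ a) (ha' : a ≤ n - 1) (hb : 1 ≤ b) (hb' : b ≤ n - 1)
    (hc : 1 ≤ c) (hc' : c ≤ n - 1) (hsum : a + b + c = n + 1)
    (hf : ∀ k : ℤ, 2 ≤ k → k ≤ n - 1 →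
      beatty n a k + beatty n b k + beatty n c k = 1) :
    a = 1 ∨ b = 1 ∨ c = 1 :=
  stmt19_general n a b c ha hb hc hsum hf
end
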